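/- Let RS be the union of p concentric spheres of distinct positive radii about the origin in R^d. Then Pol'_j(RS) = ⊕_{i=0}^{p-1} Hom'_{j-i}(RS), a direct sum, and consequently dim Pol'_j(RS) = sum_{i=0}^{p-1} dim Hom'_{j-i}(R^d). -/

import Mathlib

/-!
On a union of spheres the norm takes only the `p` values `r ℓ`, so there every power `‖x‖ ^ m`
is a linear combination of any `p` consecutive powers `‖x‖ ^ (k - i)`, `i < p`: the matrix
`(r ℓ ^ (k - i))` is a rescaled Vandermonde matrix. Multiplying the homogeneous components of an
element of `Pol'_j` by such combinations moves all of them into the degrees `j, …, j - p + 1`.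

Elements of `Hom'_k` are positively homogeneous of degree `k`. Along the ray through a point of
`RS` a vanishing sum over the degrees `j - i` is again a Vandermonde system, so each summand
vanishes: the sum is direct. Homogeneity also shows that an element of `Hom'_k`, `k ≥ 1`, vanishing
on one sphere vanishes identically, so restriction to `RS` preserves the dimension of `Hom'_k`.
-/

open MeasureTheory MvPolynomial
open scoped BigOperators RealInnerProductSpace Classical

noncomputable section

abbrev Euc (d : ℕ) := EuclideanSpace ℝ (Fin d)

/-- Double factorial, with `dfac n = 1` for `n ≤ 1`. -/
def dfac : ℕ → ℕ
  | 0 => 1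
  | 1 => 1
  | (n+2) => (n+2) * dfac n

/-- Dimension of the space of harmonic homogeneous polynomials of degree `i`
in `d` variables. -/
def harmDim (d i : ℕ) : ℕ :=
  if i = 0 then 1 else if i = 1 then d
  else Nat.choose (d + i - 1) i - Nat.choose (d + i - 3) (i - 2)

/-- `Q` is the family of Gegenbauer polynomials for `S^{d-1}`: `Q i` has degree `i`,
they are orthogonal on `[-1,1]` with respect to the weight `(1-t^2)^((d-3)/2)`,
and they are normalized by `Q i (1) = dim Harm_i(ℝ^d)`. -/
def IsGegenbauer (d : ℕ) (Q : ℕ → Polynomial ℝ) : Prop :=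
  (∀ i, (Q i).natDegree = i) ∧
  (∀ i j, i ≠ j →
    ∫ t in Set.Ioo (-1 : ℝ) 1,
      (Q i).eval t * (Q j).eval t * Real.rpow (1 - t ^ 2) (((d : ℝ) - 3) / 2) = 0) ∧
  (∀ i, (Q i).eval 1 = (harmDim d i : ℝ))

/-- Average of a function over the sphere of radius `r` about the origin,
with respect to the (rotation invariant) Hausdorff measure. -/
def sphAvg (d : ℕ) (r : ℝ) (f : Euc d → ℝ) : ℝ :=
  (∫ x in Metric.sphere (0 : Euc d) r, f x ∂(μH[(d : ℝ) - 1])) /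
    ((μH[(d : ℝ) - 1]) (Metric.sphere (0 : Euc d) r)).toReal

/-- A spherical `t`-design on the unit sphere. -/
def IsSphericalDesign (d t : ℕ) (X : Finset (Euc d)) : Prop :=
  ∀ f : MvPolynomial (Fin d) ℝ, f.totalDegree ≤ t →
    sphAvg d 1 (fun x => eval (fun i => x i) f) =
      (∑ x ∈ X, eval (fun i => x i) f) / (X.card : ℝ)

/-- A polynomial is harmonic if its Laplacian vanishes. -/
def IsHarmonicPoly {d : ℕ} (f : MvPolynomial (Fin d) ℝ) : Prop :=
  ∑ i : Fin d, pderiv i (pderiv i f) = 0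

/-- Euclidean `t`-design. -/
def IsEuclideanDesign (d t : ℕ) (X : Finset (Euc d)) (w : Euc d → ℝ) : Prop :=
  ∀ f : MvPolynomial (Fin d) ℝ, f.totalDegree ≤ t →
    (∑ r ∈ X.image (fun x => ‖x‖),
      (∑ x ∈ X.filter (fun x => ‖x‖ = r), w x) *
        sphAvg d r (fun x => eval (fun i => x i) f))
      = ∑ x ∈ X, w x * eval (fun i => x i) f

/-- `x' = x / ‖x‖`. -/
def unitize {d : ℕ} (x : Euc d) : Euc d := ‖x‖⁻¹ • x

/-- Strong Euclidean `t`-design, with respect to the Gegenbauer family `Q`. -/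
def IsStrongEuclideanDesign (d t : ℕ) (Q : ℕ → Polynomial ℝ)
    (X : Finset (Euc d)) (w : Euc d → ℝ) : Prop :=
  ∀ i ≤ t, ∀ j, 1 ≤ j → j ≤ t →
    (∑ x ∈ X, ∑ y ∈ X, w x * w y * (‖x‖ * ‖y‖) ^ i *
      (Q j).eval ⟪unitize x, unitize y⟫) = 0

/-- Restriction of a function on `ℝ^d` to a subset `T`. -/
def restrictFun {d : ℕ} (T : Set (Euc d)) (f : Euc d → ℝ) : T → ℝ := fun x => f x

/-- `Hom_j(T)`: restrictions to `T` of homogeneous degree `j` polynomials. -/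
def HomOn (d j : ℕ) (T : Set (Euc d)) : Submodule ℝ (T → ℝ) :=
  Submodule.span ℝ
    { f | ∃ p : MvPolynomial (Fin d) ℝ, p.IsHomogeneous j ∧
        f = restrictFun T (fun x => eval (fun i => x i) p) }

/-- `(‖x‖ Hom_k)(T)`: restrictions to `T` of `‖x‖ p(x)` with `p` homogeneous of degree `k`. -/
def NormHomOn (d k : ℕ) (T : Set (Euc d)) : Submodule ℝ (T → ℝ) :=
  Submodule.span ℝ
    { f | ∃ p : MvPolynomial (Fin d) ℝ, p.IsHomogeneous k ∧
        f = restrictFun T (fun x => ‖x‖ * eval (fun i => x i) p) }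

/-- `Hom'_j(T) = Hom_j(T) + (‖x‖ Hom_{j-1})(T)` (for `j ≥ 1`). -/
def HomOn' (d j : ℕ) (T : Set (Euc d)) : Submodule ℝ (T → ℝ) :=
  HomOn d j T ⊔ NormHomOn d (j - 1) T

/-- `F` belongs to `Pol'_j(ℝ^d) = Pol_j(ℝ^d) + ‖x‖ Pol_{j-1}(ℝ^d)` (as a space of
functions on `ℝ^d`), for `j : ℤ` with the convention that negative-degree spaces are `0`. -/
def InPol' (d : ℕ) (j : ℤ) (F : Euc d → ℝ) : Prop :=
  ∃ f g : MvPolynomial (Fin d) ℝ,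
    (f = 0 ∨ (f.totalDegree : ℤ) ≤ j) ∧ (g = 0 ∨ (g.totalDegree : ℤ) ≤ j - 1) ∧
    F = fun x => eval (fun i => x i) f + ‖x‖ * eval (fun i => x i) g

/-- `Pol'_j(T)`: restrictions to `T` of elements of `Pol'_j(ℝ^d)`. -/
def PolOn' (d j : ℕ) (T : Set (Euc d)) : Submodule ℝ (T → ℝ) :=
  Submodule.span ℝ { f | ∃ F : Euc d → ℝ, InPol' d (j : ℤ) F ∧ f = restrictFun T F }

theorem MvPolynomial.IsHomogeneous.eval_smul {σ R : Type*} [CommSemiring R]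
    {φ : MvPolynomial σ R} {n : ℕ} (hφ : φ.IsHomogeneous n) (c : R) (x : σ → R) :
    eval (c • x) φ = c ^ n * eval x φ := by
  rw [eval_eq, eval_eq, Finset.mul_sum]
  refine Finset.sum_congr rfl fun m hm => ?_
  have hdeg : ∑ i ∈ m.support, m i = n := by
    simpa [Finsupp.weight_apply, Finsupp.sum] using hφ (mem_support_iff.mp hm)
  simp only [Pi.smul_apply, smul_eq_mul, mul_pow, Finset.prod_mul_distrib,
    Finset.prod_pow_eq_pow_sum, hdeg]
  ring

namespace Matrix

variable {K : Type*} [Field K] {p k : ℕ} {r : Fin p → K}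

theorem isUnit_of_pow_sub (hpk : p ≤ k + 1) (hr : ∀ ℓ, r ℓ ≠ 0) (hinj : Function.Injective r) :
    IsUnit (of fun ℓ i : Fin p => r ℓ ^ (k - i)) := by
  have hfactor : of (fun ℓ i : Fin p => r ℓ ^ (k - i)) =
      diagonal (fun ℓ => r ℓ ^ (k + 1 - p)) * (vandermonde r).submatrix id Fin.revPerm := by
    ext ℓ i
    have hi := i.isLt
    simp only [of_apply, diagonal_mul, submatrix_apply, id, vandermonde_apply, Fin.revPerm_apply,
      Fin.val_rev, ← pow_add]
    congr 1
    omega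
  rw [hfactor, isUnit_iff_isUnit_det, det_mul, det_diagonal, det_permute']
  have hD : ∏ ℓ, r ℓ ^ (k + 1 - p) ≠ 0 :=
    Finset.prod_ne_zero_iff.mpr fun ℓ _ => pow_ne_zero _ (hr ℓ)
  exact (isUnit_iff_ne_zero.mpr hD).mul (((Equiv.Perm.sign _).isUnit.map (Int.castRingHom K)).mul
    (isUnit_iff_ne_zero.mpr (det_vandermonde_ne_zero_iff.mpr hinj)))

theorem exists_sum_mul_pow_sub_eq (hpk : p ≤ k + 1) (hr : ∀ ℓ, r ℓ ≠ 0)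
    (hinj : Function.Injective r) (v : Fin p → K) :
    ∃ c : Fin p → K, ∀ ℓ, ∑ i, c i * r ℓ ^ (k - i) = v ℓ := by
  obtain ⟨c, hc⟩ := mulVec_surjective_iff_isUnit.mpr (isUnit_of_pow_sub hpk hr hinj) v
  exact ⟨c, fun ℓ => by simpa [mulVec, dotProduct, mul_comm] using congrFun hc ℓ⟩

theorem eq_zero_of_sum_mul_pow_sub_eq_zero (hpk : p ≤ k + 1) (hr : ∀ ℓ, r ℓ ≠ 0)
    (hinj : Function.Injective r) {c : Fin p → K} (hc : ∀ ℓ, ∑ i, c i * r ℓ ^ (k - i) = 0) :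
    c = 0 := by
  refine mulVec_injective_iff_isUnit.mpr (isUnit_of_pow_sub hpk hr hinj) ?_
  ext ℓ
  simpa [mulVec, dotProduct, mul_comm] using hc ℓ

end Matrix

theorem finrank_iSup_of_iSupIndep {K V ι : Type*} [DivisionRing K] [AddCommGroup V] [Module K V]
    [Fintype ι] [DecidableEq ι] {W : ι → Submodule K V} [∀ i, FiniteDimensional K (W i)]
    (hW : iSupIndep W) :
    Module.finrank K ↥(⨆ i, W i) = ∑ i, Module.finrank K (W i) := by
  rw [Submodule.iSup_eq_range_dfinsupp_lsum,
    LinearMap.finrank_range_of_inj hW.dfinsupp_lsum_injective]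
  exact Module.finrank_directSum K fun i => W i

theorem Submodule.finrank_map_of_injOn {K V V' : Type*} [DivisionRing K] [AddCommGroup V]
    [Module K V] [AddCommGroup V'] [Module K V'] (f : V →ₗ[K] V') {W : Submodule K V}
    (hf : Set.InjOn f W) : Module.finrank K (W.map f) = Module.finrank K W := by
  rw [← LinearMap.range_domRestrict]
  exact LinearMap.finrank_range_of_inj fun x y hxy => Subtype.ext (hf x.2 y.2 hxy)

theorem iSupIndep_of_sum_eq_zero {R N ι : Type*} [Ring R] [AddCommGroup N] [Module R N]
    [Fintype ι] {W : ι → Submodule R N}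
    (h : ∀ v : ι → N, (∀ i, v i ∈ W i) → ∑ i, v i = 0 → ∀ i, v i = 0) : iSupIndep W := by
  refine (iSupIndep_iff_finsetSum_eq_zero_imp_eq_zero W).mpr fun s v hv hsum i hi => ?_
  have hext := h (fun i => if i ∈ s then v i else 0)
    (fun i => by split_ifs with h; exacts [hv i h, zero_mem _])
    (by rw [Finset.sum_ite_mem, Finset.univ_inter, hsum]) i
  simpa [hi] using hext

section PosHomogeneous

variable (E : Type*) [NormedAddCommGroup E] [NormedSpace ℝ E]

def posHomogeneous (k : ℕ) : Submodule ℝ (E → ℝ) where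
  carrier := {F | ∀ t : ℝ, 0 < t → ∀ x, F (t • x) = t ^ k * F x}
  zero_mem' := by simp
  add_mem' hF hG t ht x := by simp [hF t ht x, hG t ht x, mul_add]
  smul_mem' c F hF t ht x := by simp [hF t ht x, mul_left_comm]

variable {E} {p k : ℕ} {r : Fin p → ℝ}

theorem posHomogeneous.eq_zero_on_of_sum_eq_zero (hpk : p ≤ k + 1) (hr : ∀ ℓ, 0 < r ℓ)
    (hinj : Function.Injective r) {F : Fin p → E → ℝ}
    (hF : ∀ i : Fin p, F i ∈ posHomogeneous E (k - i))
    (hsum : ∀ x ∈ ⋃ ℓ, Metric.sphere (0 : E) (r ℓ), ∑ i, F i x = 0) :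
    ∀ i, ∀ x ∈ ⋃ ℓ, Metric.sphere (0 : E) (r ℓ), F i x = 0 := by
  intro i x hx
  obtain ⟨m, hm⟩ : ∃ m, ‖x‖ = r m := by simpa using hx
  have hx0 : 0 < ‖x‖ := hm ▸ hr m
  have hray : ∀ ℓ, ∑ i, F i x * (r ℓ / ‖x‖) ^ (k - (i : ℕ)) = 0 := by
    intro ℓ
    have hscaled : (r ℓ / ‖x‖) • x ∈ ⋃ ℓ, Metric.sphere (0 : E) (r ℓ) := by
      simp only [Set.mem_iUnion, mem_sphere_zero_iff_norm, norm_smul, Real.norm_eq_abs]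
      exact ⟨ℓ, by rw [abs_of_pos (div_pos (hr ℓ) hx0), div_mul_cancel₀ _ hx0.ne']⟩
    rw [← hsum _ hscaled]
    exact Finset.sum_congr rfl fun i _ => by rw [hF i _ (div_pos (hr ℓ) hx0), mul_comm]
  have hsinj : Function.Injective fun ℓ => r ℓ / ‖x‖ :=
    fun a b h => hinj ((div_left_inj' hx0.ne').mp h)
  exact congrFun (Matrix.eq_zero_of_sum_mul_pow_sub_eq_zero hpk
    (fun ℓ => (div_pos (hr ℓ) hx0).ne') hsinj hray) i

theorem posHomogeneous.eq_zero_of_eqOn_sphere (hk : k ≠ 0) {R : ℝ} (hR : 0 < R) {F : E → ℝ}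
    (hF : F ∈ posHomogeneous E k) (h0 : ∀ x ∈ Metric.sphere (0 : E) R, F x = 0) : F = 0 := by
  funext x
  rcases eq_or_ne x 0 with rfl | hx
  · have h2 := hF 2 two_pos 0
    rw [smul_zero] at h2
    have : (2 : ℝ) ^ k ≠ 1 := (one_lt_pow₀ one_lt_two hk).ne'
    exact (mul_left_eq_self₀.mp h2.symm).resolve_left this
  · have hx0 : 0 < ‖x‖ := norm_pos_iff.mpr hx
    have hy : (R / ‖x‖) • x ∈ Metric.sphere (0 : E) R := by
      rw [mem_sphere_zero_iff_norm, norm_smul, Real.norm_of_nonneg (by positivity),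
        div_mul_cancel₀ _ hx0.ne']
    calc F x = F ((‖x‖ / R) • (R / ‖x‖) • x) := by
          rw [smul_smul, div_mul_div_comm, mul_comm ‖x‖, div_self (by positivity), one_smul]
      _ = 0 := by rw [hF _ (div_pos hx0 hR), h0 _ hy, mul_zero]

end PosHomogeneous

section Euclidean

variable {d : ℕ}

def polyEval (d : ℕ) : MvPolynomial (Fin d) ℝ →ₗ[ℝ] (Euc d → ℝ) where
  toFun q x := eval (fun i => x i) q
  map_add' _ _ := by ext; simp
  map_smul' _ _ := by ext; simp

def normMul (d : ℕ) : (Euc d → ℝ) →ₗ[ℝ] (Euc d → ℝ) := LinearMap.mulLeft ℝ fun x => ‖x‖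

def restrictL (T : Set (Euc d)) : (Euc d → ℝ) →ₗ[ℝ] (T → ℝ) := LinearMap.funLeft ℝ ℝ Subtype.val

@[simp]
theorem restrictL_apply (T : Set (Euc d)) (F : Euc d → ℝ) : restrictL T F = restrictFun T F := rfl

def homSpace (d k : ℕ) : Submodule ℝ (Euc d → ℝ) :=
  (homogeneousSubmodule (Fin d) ℝ k).map (polyEval d)

-- `k - 1` truncates: `homSpace' d 0` contains `‖x‖`, which is not homogeneous of degree `0`.
def homSpace' (d k : ℕ) : Submodule ℝ (Euc d → ℝ) :=
  homSpace d k ⊔ (homSpace d (k - 1)).map (normMul d)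

theorem span_isHomogeneous_eq_map {M : Type*} [AddCommGroup M] [Module ℝ M]
    (L : MvPolynomial (Fin d) ℝ →ₗ[ℝ] M) (k : ℕ) :
    Submodule.span ℝ {f | ∃ q : MvPolynomial (Fin d) ℝ, q.IsHomogeneous k ∧ f = L q} =
      (homogeneousSubmodule (Fin d) ℝ k).map L := by
  rw [← Submodule.span_eq (homogeneousSubmodule (Fin d) ℝ k), Submodule.map_span]
  congr 1
  ext f
  simp [eq_comm]

theorem HomOn'_eq_map (k : ℕ) (T : Set (Euc d)) :
    HomOn' d k T = (homSpace' d k).map (restrictL T) := by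
  rw [HomOn', HomOn, NormHomOn, homSpace', Submodule.map_sup, homSpace, homSpace,
    ← Submodule.map_comp, ← Submodule.map_comp, ← Submodule.map_comp,
    ← span_isHomogeneous_eq_map, ← span_isHomogeneous_eq_map]
  rfl

instance (k : ℕ) : FiniteDimensional ℝ (homogeneousSubmodule (Fin d) ℝ k) :=
  Module.Finite.iff_fg.mpr (homogeneousSubmodule_fg (σ := Fin d) (R := ℝ) k)

instance (k : ℕ) (T : Set (Euc d)) : FiniteDimensional ℝ (HomOn' d k T) := by
  rw [HomOn'_eq_map, homSpace', homSpace, homSpace]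
  infer_instance

theorem homSpace'_le_posHomogeneous {k : ℕ} (hk : k ≠ 0) :
    homSpace' d k ≤ posHomogeneous (Euc d) k := by
  refine sup_le ?_ ?_
  · rintro _ ⟨q, hq, rfl⟩ t - x
    exact hq.eval_smul t _
  · rintro _ ⟨_, ⟨q, hq, rfl⟩, rfl⟩ t ht x
    simp only [normMul, LinearMap.mulLeft_apply, Pi.mul_apply, polyEval, LinearMap.coe_mk,
      AddHom.coe_mk, norm_smul, Real.norm_of_nonneg ht.le]
    rw [show (fun i => (t • x) i) = t • fun i => x i from rfl, hq.eval_smul, ← mul_pow_sub_one hk]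
    ring

theorem normPow_mul_mem_homSpace' {q : MvPolynomial (Fin d) ℝ} {e : ℕ} (hq : q.IsHomogeneous e)
    (m : ℕ) : (fun x : Euc d => ‖x‖ ^ m * eval (fun i => x i) q) ∈ homSpace' d (m + e) := by
  set N : MvPolynomial (Fin d) ℝ := ∑ i, X i ^ 2
  have hN : N.IsHomogeneous 2 := IsHomogeneous.sum _ _ _ fun i _ => isHomogeneous_X_pow i 2
  have hevalN : ∀ (s : ℕ) (x : Euc d),
      polyEval d (N ^ s * q) x = ‖x‖ ^ (2 * s) * eval (fun i => x i) q := by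
    intro s x
    simp [polyEval, N, pow_mul, EuclideanSpace.real_norm_sq_eq]
  obtain ⟨s, rfl | rfl⟩ := Nat.even_or_odd' m
  · refine Submodule.mem_sup_left ⟨N ^ s * q, ?_, funext (hevalN s)⟩
    simpa [mul_comm] using (hN.pow s).mul hq
  · refine Submodule.mem_sup_right ⟨polyEval d (N ^ s * q), ⟨_, ?_, rfl⟩, ?_⟩
    · simpa [mul_comm, Nat.add_sub_cancel] using (hN.pow s).mul hq
    · funext x
      simp only [normMul, LinearMap.mulLeft_apply, Pi.mul_apply, hevalN]
      ring

theorem injOn_restrictL_homSpace' {k : ℕ} (hk : k ≠ 0) {R : ℝ} (hR : 0 < R) {T : Set (Euc d)}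
    (hT : Metric.sphere 0 R ⊆ T) : Set.InjOn (restrictL T) (homSpace' d k) := by
  intro F hF G hG hFG
  refine sub_eq_zero.mp (posHomogeneous.eq_zero_of_eqOn_sphere hk hR
    (homSpace'_le_posHomogeneous hk (sub_mem hF hG)) fun x hx => ?_)
  exact sub_eq_zero.mpr (congrFun hFG ⟨x, hT hx⟩)

theorem finrank_HomOn'_eq_finrank_homSpace' {k : ℕ} (hk : k ≠ 0) {R : ℝ} (hR : 0 < R)
    {T : Set (Euc d)} (hT : Metric.sphere 0 R ⊆ T) :
    Module.finrank ℝ (HomOn' d k T) = Module.finrank ℝ (homSpace' d k) := by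
  rw [HomOn'_eq_map]
  exact Submodule.finrank_map_of_injOn _ (injOn_restrictL_homSpace' hk hR hT)

theorem HomOn'_le_PolOn' {k j : ℕ} (hk : 1 ≤ k) (hkj : k ≤ j) (T : Set (Euc d)) :
    HomOn' d k T ≤ PolOn' d j T := by
  have hPol : PolOn' d j T = (Submodule.span ℝ {F | InPol' d j F}).map (restrictL T) := by
    rw [PolOn', Submodule.map_span]
    congr 1
    ext f
    simp [eq_comm]
  rw [HomOn'_eq_map, hPol]
  refine Submodule.map_mono (sup_le ?_ ?_)
  · rintro _ ⟨q, hq, rfl⟩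
    refine Submodule.subset_span ⟨q, 0, Or.inr ?_, Or.inl rfl, by ext; simp [polyEval]⟩
    exact_mod_cast (IsHomogeneous.totalDegree_le hq).trans hkj
  · rintro _ ⟨_, ⟨q, hq, rfl⟩, rfl⟩
    refine Submodule.subset_span ⟨0, q, Or.inl rfl, Or.inr ?_, by ext; simp [polyEval, normMul]⟩
    have := IsHomogeneous.totalDegree_le hq
    omega

variable {p j : ℕ} {r : Fin p → ℝ}

theorem restrictL_normPow_mul_mem_iSup_HomOn' {T : Set (Euc d)} (hT : ∀ x ∈ T, ∃ ℓ, ‖x‖ = r ℓ)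
    (hr : ∀ ℓ, r ℓ ≠ 0) (hinj : Function.Injective r) {q : MvPolynomial (Fin d) ℝ} {e m : ℕ}
    (hq : q.IsHomogeneous e) (hem : e + m ≤ j) :
    restrictL T (fun x => ‖x‖ ^ m * eval (fun i => x i) q) ∈
      ⨆ i : Fin p, HomOn' d (j - i) T := by
  by_cases hfew : j - (e + m) < p
  · refine Submodule.mem_iSup_of_mem ⟨j - (e + m), hfew⟩ ?_
    rw [HomOn'_eq_map]
    refine Submodule.mem_map_of_mem ?_
    convert normPow_mul_mem_homSpace' hq m using 2
    simp only
    omega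
  · obtain ⟨c, hc⟩ := Matrix.exists_sum_mul_pow_sub_eq (k := j - e) (by omega) hr hinj
      fun ℓ => r ℓ ^ m
    have hcomb : restrictL T (fun x => ‖x‖ ^ m * eval (fun i => x i) q) =
        ∑ i, c i • restrictL T (fun x => ‖x‖ ^ (j - e - i) * eval (fun i => x i) q) := by
      funext x
      obtain ⟨ℓ, hℓ⟩ := hT x x.2
      simp [restrictFun, hℓ, ← hc ℓ, Finset.sum_mul, mul_assoc]
    rw [hcomb]
    refine Submodule.sum_mem _ fun i _ => Submodule.smul_mem _ _ (Submodule.mem_iSup_of_mem i ?_)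
    rw [HomOn'_eq_map]
    refine Submodule.mem_map_of_mem ?_
    convert normPow_mul_mem_homSpace' hq (j - e - i) using 2
    omega

theorem restrictL_normPow_mul_mem_iSup_HomOn'_of_totalDegree {T : Set (Euc d)}
    (hT : ∀ x ∈ T, ∃ ℓ, ‖x‖ = r ℓ) (hr : ∀ ℓ, r ℓ ≠ 0) (hinj : Function.Injective r)
    {f : MvPolynomial (Fin d) ℝ} {m : ℕ} (hf : f = 0 ∨ (f.totalDegree : ℤ) ≤ j - m) :
    restrictL T (fun x => ‖x‖ ^ m * eval (fun i => x i) f) ∈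
      ⨆ i : Fin p, HomOn' d (j - i) T := by
  set L := restrictL T ∘ₗ LinearMap.mulLeft ℝ (fun x : Euc d => ‖x‖ ^ m) ∘ₗ polyEval d
  have hL : ∀ q, L q = restrictL T (fun x => ‖x‖ ^ m * eval (fun i => x i) q) := fun q => rfl
  rw [← hL, ← sum_homogeneousComponent f, map_sum]
  refine Submodule.sum_mem _ fun e _ => ?_
  rcases eq_or_ne (homogeneousComponent e f) 0 with h0 | hne
  · rw [h0, map_zero]
    exact zero_mem _
  have hf0 : f ≠ 0 := by
    rintro rfl
    simp at hne
  have he : e ≤ f.totalDegree := le_of_not_gt (mt (homogeneousComponent_eq_zero e f) hne)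
  rw [hL]
  refine restrictL_normPow_mul_mem_iSup_HomOn' hT hr hinj
    (homogeneousComponent_isHomogeneous e f) ?_
  have := hf.resolve_left hf0
  omega

theorem PolOn'_le_iSup_HomOn' {T : Set (Euc d)} (hT : ∀ x ∈ T, ∃ ℓ, ‖x‖ = r ℓ)
    (hr : ∀ ℓ, r ℓ ≠ 0) (hinj : Function.Injective r) :
    PolOn' d j T ≤ ⨆ i : Fin p, HomOn' d (j - i) T := by
  refine Submodule.span_le.mpr ?_
  rintro _ ⟨_, ⟨f, g, hf, hg, rfl⟩, rfl⟩
  have hsplit : restrictFun T (fun x => eval (fun i => x i) f + ‖x‖ * eval (fun i => x i) g) =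
      restrictL T (fun x => ‖x‖ ^ 0 * eval (fun i => x i) f) +
        restrictL T (fun x => ‖x‖ ^ 1 * eval (fun i => x i) g) := by
    funext x
    simp [restrictFun]
  rw [SetLike.mem_coe, hsplit]
  exact add_mem
    (restrictL_normPow_mul_mem_iSup_HomOn'_of_totalDegree hT hr hinj (by simpa using hf))
    (restrictL_normPow_mul_mem_iSup_HomOn'_of_totalDegree hT hr hinj (by simpa using hg))

theorem iSupIndep_HomOn' (hpj : p ≤ j) (hr : ∀ ℓ, 0 < r ℓ) (hinj : Function.Injective r) :
    iSupIndep fun i : Fin p => HomOn' d (j - i) (⋃ ℓ, Metric.sphere (0 : Euc d) (r ℓ)) := by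
  refine iSupIndep_of_sum_eq_zero fun v hv hsum => ?_
  simp_rw [HomOn'_eq_map] at hv
  choose F hF hFv using hv
  have hzero := posHomogeneous.eq_zero_on_of_sum_eq_zero (k := j) (by omega) hr hinj
    (fun i => homSpace'_le_posHomogeneous (by have := i.isLt; omega) (hF i))
    fun x hx => by simpa [← hFv, restrictFun] using congrFun hsum ⟨x, hx⟩
  intro i
  funext x
  rw [← hFv i]
  exact hzero i x x.2

end Euclidean

/-- For `RS` a union of `p` concentric spheres of distinct positive radii,
`Pol'_j(RS) = ⊕_{i=0}^{p-1} Hom'_{j-i}(RS)` (a direct sum), and consequently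
`dim Pol'_j(RS) = ∑_{i=0}^{p-1} dim Hom'_{j-i}(ℝ^d)`. -/
theorem polOn'_decomposition (d p j : ℕ) (hpj : p ≤ j) (r : Fin p → ℝ)
    (hrpos : ∀ i, 0 < r i) (hrinj : Function.Injective r) :
    (PolOn' d j (⋃ i, Metric.sphere (0 : Euc d) (r i)) =
        ⨆ i : Fin p, HomOn' d (j - (i : ℕ)) (⋃ i, Metric.sphere (0 : Euc d) (r i))) ∧
      iSupIndep
        (fun i : Fin p => HomOn' d (j - (i : ℕ)) (⋃ i, Metric.sphere (0 : Euc d) (r i))) ∧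
      Module.finrank ℝ (PolOn' d j (⋃ i, Metric.sphere (0 : Euc d) (r i))) =
        ∑ i : Fin p, Module.finrank ℝ (HomOn' d (j - (i : ℕ)) (Set.univ : Set (Euc d))) := by
  have hdecomp : PolOn' d j (⋃ i, Metric.sphere (0 : Euc d) (r i)) =
      ⨆ i : Fin p, HomOn' d (j - (i : ℕ)) (⋃ i, Metric.sphere (0 : Euc d) (r i)) :=
    le_antisymm (PolOn'_le_iSup_HomOn' (fun x hx => by simpa using hx) (fun ℓ => (hrpos ℓ).ne')
      hrinj) (iSup_le fun i => HomOn'_le_PolOn' (by omega) (by omega) _)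
  have hindep := iSupIndep_HomOn' (d := d) hpj hrpos hrinj
  refine ⟨hdecomp, hindep, ?_⟩
  rw [hdecomp, finrank_iSup_of_iSupIndep hindep]
  refine Finset.sum_congr rfl fun i _ => ?_
  have hk : j - (i : ℕ) ≠ 0 := by omega
  rw [finrank_HomOn'_eq_finrank_homSpace' hk (hrpos i) (Set.subset_iUnion_of_subset i subset_rfl),
    finrank_HomOn'_eq_finrank_homSpace' hk one_pos (Set.subset_univ _)]

end
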